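/- arXiv:1312.7368 — 3 statements merged into one kernel-verified Lean document; each statement's English description precedes it below -/
import Mathlib

section
/- Any category with length function is acyclic: if (C, ℓ, B) is a category with length function, then every endomorphism in C is an identity morphism (i.e., for every object x, every morphism f : x → x equals the identity of x), and for any two distinct objects x ≠ y, the sets Hom(x, y) and Hom(y, x) are not both nonempty. -/
/-!
Precomposing an endomorphism `f : x ⟶ x` with a morphism `u : b ⟶ x` out of a base object
gives a second morphism `b ⟶ x`, so `ℓ f + ℓ u = ℓ u` and `ℓ f = 0`; hence `f` is an identity.
If `g : x ⟶ y` and `h : y ⟶ x`, then `g ≫ h` is an endomorphism, so `ℓ g = 0` and `x = y`.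
-/

open CategoryTheory

section LengthFunction

variable {C : Type*} [Category C] (ℓ : ∀ {x y : C}, (x ⟶ y) → ℕ)
  (hcomp : ∀ {x y z : C} (u : x ⟶ y) (v : y ⟶ z), ℓ (u ≫ v) = ℓ v + ℓ u)
  {B : Set C} (hB1 : ∀ x : C, ∃ b ∈ B, Nonempty (b ⟶ x))
  (hB2 : ∀ {x b b' : C}, b ∈ B → b' ∈ B → ∀ (u : b ⟶ x) (u' : b' ⟶ x), ℓ u = ℓ u')
include hcomp hB1 hB2

theorem length_endomorphism_eq_zero {x : C} (f : x ⟶ x) : ℓ f = 0 := by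
  obtain ⟨b, hb, ⟨u⟩⟩ := hB1 x
  have h := hB2 hb hb (u ≫ f) u
  rw [hcomp] at h
  omega

theorem length_eq_zero_of_hom_back {x y : C} (g : x ⟶ y) (h : y ⟶ x) : ℓ g = 0 := by
  have hgh := length_endomorphism_eq_zero ℓ hcomp hB1 hB2 (g ≫ h)
  rw [hcomp] at hgh
  omega

end LengthFunction

/-- Any category with length function is acyclic: every endomorphism is
an identity, and for distinct objects `x ≠ y` the hom-sets `Hom(x,y)` and `Hom(y,x)` are
not both nonempty. -/
theorem category_with_length_function_is_acyclic {C : Type*} [Category C]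
    (ℓ : ∀ {x y : C}, (x ⟶ y) → ℕ)
    (hcomp : ∀ {x y z : C} (u : x ⟶ y) (v : y ⟶ z), ℓ (u ≫ v) = ℓ v + ℓ u)
    (hid : ∀ {x y : C} (u : x ⟶ y), ℓ u = 0 ↔ ∃ h : x = y, u = eqToHom h)
    (B : Set C)
    (hB1 : ∀ x : C, ∃ b ∈ B, Nonempty (b ⟶ x))
    (hB2 : ∀ {x b b' : C}, b ∈ B → b' ∈ B → ∀ (u : b ⟶ x) (u' : b' ⟶ x), ℓ u = ℓ u') :
    (∀ (x : C) (f : x ⟶ x), f = 𝟙 x) ∧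
    (∀ x y : C, x ≠ y → ¬(Nonempty (x ⟶ y) ∧ Nonempty (y ⟶ x))) := by
  constructor
  · intro x f
    obtain ⟨_, hf⟩ := (hid f).mp (length_endomorphism_eq_zero ℓ hcomp hB1 hB2 f)
    simpa using hf
  · rintro x y hxy ⟨⟨g⟩, ⟨h⟩⟩
    exact hxy ((hid g).mp (length_eq_zero_of_hom_back ℓ hcomp hB1 hB2 g h)).1
end

section
/- If f₁ : X₁ → Y₁ and f₂ : X₂ → Y₂ are continuous surjective closed maps between metrizable topological spaces, then the product map f₁ × f₂ : X₁ × X₂ → Y₁ × Y₂, (x₁, x₂) ↦ (f₁(x₁), f₂(x₂)), is a quotient map. -/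
/-!
A continuous map into a sequential space is a quotient map as soon as every convergent sequence
has a subsequence that lifts to a sequence converging to a point over the limit. This lifting
property is stable under products, and `Y₁ × Y₂` is metrizable, hence sequential.

A closed continuous surjection `f` out of a metrizable space has the lifting property. Lift
`u → a` pointwise to `p`. If `p` has a cluster point `x`, a subsequence of `p` converges to `x`
and `f x = a`. Otherwise the points `p n` form a locally finite family, so each tail
`f '' (p '' [N, ∞))` is closed; it contains a tail of `u`, hence `a`, so `u n = a` infinitely
often and a constant sequence is a lift.
-/

open Filter Topology Set

section LocallyFinite

variable {ι X : Type*} [TopologicalSpace X]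

theorem locallyFinite_singleton_of_forall_not_mapClusterPt {p : ι → X}
    (h : ∀ x, ¬MapClusterPt x cofinite p) : LocallyFinite fun i => ({p i} : Set X) := by
  intro x
  obtain ⟨t, ht, hev⟩ : ∃ t ∈ 𝓝 x, ∀ᶠ i in cofinite, p i ∉ t := by
    simpa [mapClusterPt_iff_frequently, not_frequently] using h x
  exact ⟨t, ht, by simpa [singleton_inter_nonempty] using eventually_cofinite.1 hev⟩

theorem isClosed_image_of_forall_not_mapClusterPt [T1Space X] {p : ι → X}
    (h : ∀ x, ¬MapClusterPt x cofinite p) (s : Set ι) : IsClosed (p '' s) := by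
  rw [image_eq_iUnion, biUnion_eq_iUnion]
  exact ((locallyFinite_singleton_of_forall_not_mapClusterPt h).comp_injective
    Subtype.val_injective).isClosed_iUnion fun _ => isClosed_singleton

end LocallyFinite

section SubseqLifts

variable {X Y : Type*} [TopologicalSpace X] [TopologicalSpace Y]

def HasConvergentSubseqLifts (f : X → Y) : Prop :=
  ∀ ⦃u : ℕ → Y⦄ ⦃a : Y⦄, Tendsto u atTop (𝓝 a) →
    ∃ φ : ℕ → ℕ, StrictMono φ ∧ ∃ q : ℕ → X, (∀ k, f (q k) = u (φ k)) ∧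
      ∃ x, f x = a ∧ Tendsto q atTop (𝓝 x)

theorem IsClosedMap.hasConvergentSubseqLifts [FirstCountableTopology X] [T1Space X] [T2Space Y]
    {f : X → Y} (hcl : IsClosedMap f) (hc : Continuous f) (hs : Function.Surjective f) :
    HasConvergentSubseqLifts f := by
  intro u a hu
  choose p hp using fun n => hs (u n)
  have hfp : f ∘ p = u := funext hp
  by_cases hclu : ∃ x, MapClusterPt x atTop p
  · obtain ⟨x, hx⟩ := hclu
    have hfx : MapClusterPt (f x) atTop u := hfp ▸ hx.continuousAt_comp hc.continuousAt
    have hxa : f x = a := eq_of_nhds_neBot (hfx.clusterPt.mono hu).neBot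
    obtain ⟨φ, hφ, hpφ⟩ := hx.tendsto_subseq
    exact ⟨φ, hφ, p ∘ φ, fun k => hp (φ k), x, hxa, hpφ⟩
  · rw [not_exists, ← Nat.cofinite_eq_atTop] at hclu
    have hfreq : ∃ᶠ n in atTop, u n = a := by
      refine frequently_atTop.2 fun N => ?_
      have htail : IsClosed (u '' Ici N) := by
        rw [← hfp, image_comp]
        exact hcl _ (isClosed_image_of_forall_not_mapClusterPt hclu _)
      obtain ⟨n, hn, hna⟩ := htail.mem_of_tendsto hu
        (eventually_atTop.2 ⟨N, fun n hn => mem_image_of_mem u hn⟩)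
      exact ⟨n, hn, hna⟩
    obtain ⟨φ, hφ, hφa⟩ := extraction_of_frequently_atTop hfreq
    obtain ⟨x, rfl⟩ := hs a
    exact ⟨φ, hφ, fun _ => x, fun k => (hφa k).symm, x, rfl, tendsto_const_nhds⟩

theorem HasConvergentSubseqLifts.prodMap {X₂ Y₂ : Type*} [TopologicalSpace X₂]
    [TopologicalSpace Y₂] {f : X → Y} {f₂ : X₂ → Y₂} (h : HasConvergentSubseqLifts f)
    (h₂ : HasConvergentSubseqLifts f₂) : HasConvergentSubseqLifts (Prod.map f f₂) := by
  intro u a hu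
  obtain ⟨φ, hφ, q, hq, x, hxa, hqx⟩ := h hu.fst_nhds
  obtain ⟨ψ, hψ, q₂, hq₂, x₂, hxa₂, hqx₂⟩ := h₂ (hu.snd_nhds.comp hφ.tendsto_atTop)
  refine ⟨φ ∘ ψ, hφ.comp hψ, fun k => (q (ψ k), q₂ k), ?_, (x, x₂), by simp [hxa, hxa₂],
    (hqx.comp hψ.tendsto_atTop).prodMk_nhds hqx₂⟩
  exact fun k => Prod.ext (hq (ψ k)) (hq₂ k)

theorem HasConvergentSubseqLifts.surjective {f : X → Y} (h : HasConvergentSubseqLifts f) :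
    Function.Surjective f := fun a =>
  let ⟨_, _, _, _, x, hxa, _⟩ := h (tendsto_const_nhds (x := a))
  ⟨x, hxa⟩

theorem HasConvergentSubseqLifts.isQuotientMap [SequentialSpace Y] {f : X → Y}
    (h : HasConvergentSubseqLifts f) (hc : Continuous f) : IsQuotientMap f := by
  refine ⟨.of_isClosed_preimage_iff_isClosed fun C => ⟨fun hC => ?_, fun hC => hC.preimage hc⟩,
    h.surjective⟩
  refine IsSeqClosed.isClosed fun u a hu hua => ?_
  obtain ⟨φ, -, q, hq, x, rfl, hqx⟩ := h hua
  exact hC.mem_of_tendsto hqx (Eventually.of_forall fun k =>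
    mem_preimage.2 <| (hq k).symm ▸ hu (φ k))

end SubseqLifts

/-- If `f₁ : X₁ → Y₁` and `f₂ : X₂ → Y₂` are continuous surjective closed
maps between metrizable topological spaces, then the product map
`f₁ × f₂ : X₁ × X₂ → Y₁ × Y₂` is a quotient map. -/
theorem isQuotientMap_prodMap_of_isClosedMap
    {X₁ Y₁ X₂ Y₂ : Type*}
    [TopologicalSpace X₁] [TopologicalSpace Y₁] [TopologicalSpace X₂] [TopologicalSpace Y₂]
    [TopologicalSpace.MetrizableSpace X₁] [TopologicalSpace.MetrizableSpace Y₁]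
    [TopologicalSpace.MetrizableSpace X₂] [TopologicalSpace.MetrizableSpace Y₂]
    {f₁ : X₁ → Y₁} {f₂ : X₂ → Y₂}
    (hc₁ : Continuous f₁) (hs₁ : Function.Surjective f₁) (hcl₁ : IsClosedMap f₁)
    (hc₂ : Continuous f₂) (hs₂ : Function.Surjective f₂) (hcl₂ : IsClosedMap f₂) :
    Topology.IsQuotientMap (Prod.map f₁ f₂) :=
  ((hcl₁.hasConvergentSubseqLifts hc₁ hs₁).prodMap
    (hcl₂.hasConvergentSubseqLifts hc₂ hs₂)).isQuotientMap (hc₁.prodMap hc₂)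
end

section
/- Let E be a real normed vector space, K a finite simplicial complex in E, and A a full subcomplex of K. Then the underlying space |A| is contained in the regular neighborhood St(A;K), and there is a strong deformation retraction of St(A;K) onto |A|: a continuous map H : St(A;K) × [0,1] → St(A;K) with H(z,0) = z for all z, H(z,1) ∈ |A| for all z, and H(a,t) = a for all a ∈ |A| and all t ∈ [0,1]. -/
/-!
Every point `z ∈ |K|` has barycentric coordinates `β_y(z)`, unique by affine independence and
the intersection property of faces, and `z` lies in the combinatorial interior of the face on
which they are positive. Hence `z ∈ St(A;K)` exactly when some vertex of `A` carries positive
weight. The homotopy multiplies the weights of the vertices outside `A` by `1 - t` and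
renormalizes: the positive weights at vertices of `A` survive, so the path stays in the star and
fixes `|A|`, and at `t = 1` the point lies on a face of `K` spanned by vertices of `A`, which is a
face of `A` because `A` is full. The coordinates are continuous on each closed simplex (the inverse
of a continuous bijection from the compact standard simplex), and there are finitely many
simplices, so the homotopy is continuous.
-/

open Geometry Set

variable {E : Type*} [NormedAddCommGroup E] [NormedSpace ℝ E]

/-- The combinatorial interior of a face `s`: the convex hull of `s` minus the union of the
convex hulls of the proper subsets of `s`. -/
def combInterior (s : Finset E) : Set E :=
  convexHull ℝ (s : Set E) \ ⋃ (t : Finset E) (_ : t ⊂ s), convexHull ℝ (t : Set E)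

/-- The regular neighborhood (open star) of the set of vertices `V` in the complex with set of
faces `F`: the union of the combinatorial interiors of those faces in `F` that contain at least
one vertex belonging to `V`. -/
def starOf (F : Set (Finset E)) (V : Set E) : Set E :=
  ⋃ s ∈ {s ∈ F | ∃ v ∈ V, v ∈ s}, combInterior s

theorem AffineIndependent.eq_of_sum_smul_eq {k V ι : Type*} [Ring k] [AddCommGroup V]
    [Module k V] [Fintype ι] {p : ι → V} (hp : AffineIndependent k p) {w w' : ι → k}
    (hw : ∑ i, w i = 1) (hw' : ∑ i, w' i = 1) (h : ∑ i, w i • p i = ∑ i, w' i • p i) :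
    w = w' := by
  refine (affineIndependent_iff_eq_of_fintype_affineCombination_eq k p).1 hp w w' hw hw' ?_
  rwa [Finset.affineCombination_eq_linear_combination _ _ _ hw,
    Finset.affineCombination_eq_linear_combination _ _ _ hw']

structure IsBaryWeights (s : Finset E) (z : E) (w : E → ℝ) : Prop where
  nonneg : ∀ y, 0 ≤ w y
  eq_zero_of_notMem : ∀ y ∉ s, w y = 0
  sum_eq_one : ∑ y ∈ s, w y = 1
  sum_smul_eq : ∑ y ∈ s, w y • y = z

namespace IsBaryWeights

variable {s t : Finset E} {z : E} {w w' : E → ℝ}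

theorem mem_convexHull (h : IsBaryWeights s z w) : z ∈ convexHull ℝ (s : Set E) :=
  Finset.mem_convexHull'.2 ⟨w, fun y _ => h.nonneg y, h.sum_eq_one, h.sum_smul_eq⟩

theorem mono (h : IsBaryWeights s z w) (hst : s ⊆ t) : IsBaryWeights t z w where
  nonneg := h.nonneg
  eq_zero_of_notMem y hy := h.eq_zero_of_notMem y fun hys => hy (hst hys)
  sum_eq_one := by
    rw [← Finset.sum_subset hst fun y _ hy => h.eq_zero_of_notMem y hy, h.sum_eq_one]
  sum_smul_eq := by
    rw [← Finset.sum_subset hst fun y _ hy => by rw [h.eq_zero_of_notMem y hy, zero_smul],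
      h.sum_smul_eq]

theorem of_eq_zero (h : IsBaryWeights s z w) (hts : t ⊆ s)
    (hw : ∀ y ∈ s, y ∉ t → w y = 0) : IsBaryWeights t z w where
  nonneg := h.nonneg
  eq_zero_of_notMem y hy := by
    by_cases hys : y ∈ s
    · exact hw y hys hy
    · exact h.eq_zero_of_notMem y hys
  sum_eq_one := by rw [Finset.sum_subset hts hw, h.sum_eq_one]
  sum_smul_eq := by
    rw [Finset.sum_subset hts fun y hys hy => by rw [hw y hys hy, zero_smul], h.sum_smul_eq]

theorem indicator {w : E → ℝ} (hw₀ : ∀ y ∈ s, 0 ≤ w y) (hw₁ : ∑ y ∈ s, w y = 1) :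
    IsBaryWeights s (∑ y ∈ s, w y • y) ((s : Set E).indicator w) where
  nonneg y := Set.indicator_nonneg (fun y hy => hw₀ y hy) y
  eq_zero_of_notMem y hy := Set.indicator_of_notMem (by exact_mod_cast hy) w
  sum_eq_one := by
    rw [← hw₁]
    exact Finset.sum_congr rfl fun y hy => Set.indicator_of_mem (by exact_mod_cast hy) w
  sum_smul_eq := Finset.sum_congr rfl fun y hy => by
    rw [Set.indicator_of_mem (by exact_mod_cast hy) w]

theorem eq (hs : AffineIndependent ℝ ((↑) : s → E)) (h : IsBaryWeights s z w)
    (h' : IsBaryWeights s z w') : w = w' := by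
  have hsub : (fun v : s => w v) = fun v : s => w' v := by
    refine hs.eq_of_sum_smul_eq ?_ ?_ ?_ <;>
      simp only [Finset.sum_coe_sort s (fun y => w y), Finset.sum_coe_sort s (fun y => w' y),
        Finset.sum_coe_sort s (fun y => w y • y), Finset.sum_coe_sort s (fun y => w' y • y),
        h.sum_eq_one, h'.sum_eq_one, h.sum_smul_eq, h'.sum_smul_eq]
  funext y
  by_cases hy : y ∈ s
  · exact congrFun hsub ⟨y, hy⟩
  · rw [h.eq_zero_of_notMem y hy, h'.eq_zero_of_notMem y hy]

end IsBaryWeights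

theorem exists_isBaryWeights {s : Finset E} {z : E} (hz : z ∈ convexHull ℝ (s : Set E)) :
    ∃ w, IsBaryWeights s z w := by
  obtain ⟨w, hw₀, hw₁, rfl⟩ := Finset.mem_convexHull'.1 hz
  exact ⟨_, IsBaryWeights.indicator hw₀ hw₁⟩

noncomputable def baryMap (s : Finset E) (w : stdSimplex ℝ s) : convexHull ℝ (s : Set E) :=
  ⟨∑ v : s, (w : s → ℝ) v • (v : E),
    (convex_convexHull ℝ _).sum_mem (fun v _ => w.2.1 v) w.2.2
    fun v _ => subset_convexHull ℝ _ v.2⟩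

theorem continuous_baryMap (s : Finset E) : Continuous (baryMap s) := by
  refine Continuous.subtype_mk (continuous_finsetSum _ fun v _ => ?_) _
  exact ((continuous_apply v).comp continuous_subtype_val).smul continuous_const

theorem baryMap_bijective {s : Finset E} (hs : AffineIndependent ℝ ((↑) : s → E)) :
    Function.Bijective (baryMap s) := by
  refine ⟨fun w w' h => Subtype.ext (hs.eq_of_sum_smul_eq w.2.2 w'.2.2 (congrArg Subtype.val h)),
    fun z => ?_⟩
  obtain ⟨w, hw⟩ := exists_isBaryWeights z.2
  refine ⟨⟨fun v => w v, fun v => hw.nonneg v, ?_⟩, Subtype.ext ?_⟩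
  · rw [Finset.sum_coe_sort s w]; exact hw.sum_eq_one
  · exact (Finset.sum_coe_sort s fun y => w y • y).trans hw.sum_smul_eq

noncomputable def baryHomeomorph {s : Finset E} (hs : AffineIndependent ℝ ((↑) : s → E)) :
    stdSimplex ℝ s ≃ₜ convexHull ℝ (s : Set E) :=
  (continuous_baryMap s).homeoOfEquivCompactToT2 (f := Equiv.ofBijective _ (baryMap_bijective hs))

namespace Geometry.SimplicialComplex

variable {K : SimplicialComplex ℝ E} {s : Finset E} {z : E} {w : E → ℝ}

/-- Junk unless `z ∈ K.space`. -/
noncomputable def baryCoord (K : SimplicialComplex ℝ E) (z : E) : E → ℝ :=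
  Classical.epsilon fun w => ∃ s ∈ K.faces, IsBaryWeights s z w

theorem baryCoord_eq (hs : s ∈ K.faces) (hw : IsBaryWeights s z w) : K.baryCoord z = w := by
  classical
  obtain ⟨s', hs', hβ⟩ :=
    Classical.epsilon_spec (p := fun w => ∃ s ∈ K.faces, IsBaryWeights s z w) ⟨w, s, hs, hw⟩
  have hz : z ∈ convexHull ℝ ((s' ∩ s : Finset E) : Set E) := by
    rw [Finset.coe_inter, ← K.convexHull_inter_convexHull hs' hs]
    exact ⟨hβ.mem_convexHull, hw.mem_convexHull⟩
  obtain ⟨w', hw'⟩ := exists_isBaryWeights hz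
  calc K.baryCoord z = w' := hβ.eq (K.indep hs') (hw'.mono Finset.inter_subset_left)
    _ = w := (hw'.mono Finset.inter_subset_right).eq (K.indep hs) hw

theorem isBaryWeights_baryCoord (hs : s ∈ K.faces) (hz : z ∈ convexHull ℝ (s : Set E)) :
    IsBaryWeights s z (K.baryCoord z) := by
  obtain ⟨w, hw⟩ := exists_isBaryWeights hz
  rwa [baryCoord_eq hs hw]

theorem baryCoord_nonneg (hz : z ∈ K.space) (y : E) : 0 ≤ K.baryCoord z y := by
  obtain ⟨s, hs, hzs⟩ := mem_space_iff.1 hz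
  exact (isBaryWeights_baryCoord hs hzs).nonneg y

theorem mem_combInterior_iff (hs : s ∈ K.faces) :
    z ∈ combInterior s ↔
      z ∈ convexHull ℝ (s : Set E) ∧ ∀ y ∈ s, 0 < K.baryCoord z y := by
  classical
  constructor
  · rintro ⟨hz, hz_bdry⟩
    have hβ := isBaryWeights_baryCoord hs hz
    refine ⟨hz, fun y hy => (hβ.nonneg y).lt_of_ne fun h0 => hz_bdry ?_⟩
    have hβ' : IsBaryWeights (s.erase y) z (K.baryCoord z) :=
      hβ.of_eq_zero (Finset.erase_subset y s) fun x hxs hx => by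
        obtain rfl : x = y := by simpa [hxs] using hx
        exact h0.symm
    exact mem_iUnion₂.2 ⟨s.erase y, Finset.erase_ssubset hy, hβ'.mem_convexHull⟩
  · rintro ⟨hz, hpos⟩
    refine ⟨hz, fun h => ?_⟩
    obtain ⟨t, hts, hzt⟩ := mem_iUnion₂.1 h
    have ht : t ∈ K.faces := K.down_closed hs hts.subset <|
      Finset.nonempty_iff_ne_empty.2 fun h => by simp [h] at hzt
    obtain ⟨y, hys, hyt⟩ := Finset.exists_of_ssubset hts
    exact (hpos y hys).ne' ((isBaryWeights_baryCoord ht hzt).eq_zero_of_notMem y hyt)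

theorem centerMass_mem_combInterior (hs : s ∈ K.faces) (hw : ∀ y ∈ s, 0 < w y) :
    s.centerMass w id ∈ combInterior s := by
  have hW : 0 < ∑ y ∈ s, w y := Finset.sum_pos hw (K.nonempty_of_mem_faces hs)
  have hβ := IsBaryWeights.indicator (s := s) (w := fun y => w y / ∑ y ∈ s, w y)
    (fun y hy => (div_pos (hw y hy) hW).le) (by rw [← Finset.sum_div, div_self hW.ne'])
  have hcm : ∑ y ∈ s, (w y / ∑ y ∈ s, w y) • y = s.centerMass w id := by
    simp only [Finset.centerMass, Finset.smul_sum, smul_smul, div_eq_inv_mul, id]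
  rw [hcm] at hβ
  refine (mem_combInterior_iff hs).2 ⟨hβ.mem_convexHull, fun y hy => ?_⟩
  rw [baryCoord_eq hs hβ, Set.indicator_of_mem (by exact_mod_cast hy)]
  exact div_pos (hw y hy) hW

theorem baryHomeomorph_symm_apply (hs : s ∈ K.faces) (hz : z ∈ convexHull ℝ (s : Set E))
    (v : s) : ((baryHomeomorph (K.indep hs)).symm ⟨z, hz⟩ : s → ℝ) v = K.baryCoord z v := by
  have hβ := isBaryWeights_baryCoord hs hz
  have hmem : (fun v : s => K.baryCoord z v) ∈ stdSimplex ℝ s :=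
    ⟨fun v => hβ.nonneg v, by rw [Finset.sum_coe_sort s (K.baryCoord z)]; exact hβ.sum_eq_one⟩
  have hsymm : (baryHomeomorph (K.indep hs)).symm ⟨z, hz⟩ = ⟨_, hmem⟩ := by
    rw [Homeomorph.symm_apply_eq]
    exact Subtype.ext ((Finset.sum_coe_sort s fun y => K.baryCoord z y • y).trans
      hβ.sum_smul_eq).symm
  rw [hsymm]
  rfl

theorem continuousOn_baryCoord_convexHull (hs : s ∈ K.faces) (y : E) :
    ContinuousOn (fun z => K.baryCoord z y) (convexHull ℝ (s : Set E)) := by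
  by_cases hy : y ∈ s
  · rw [continuousOn_iff_continuous_domRestrict]
    have hcoord : (convexHull ℝ (s : Set E)).domRestrict (fun z => K.baryCoord z y) =
        fun z => ((baryHomeomorph (K.indep hs)).symm z : s → ℝ) ⟨y, hy⟩ :=
      funext fun z => (baryHomeomorph_symm_apply hs z.2 ⟨y, hy⟩).symm
    rw [hcoord]
    exact (continuous_apply _).comp (continuous_subtype_val.comp (baryHomeomorph _).symm.continuous)
  · exact continuousOn_const.congr fun z hz =>
      (isBaryWeights_baryCoord hs hz).eq_zero_of_notMem y hy

theorem continuousOn_baryCoord (hK : K.faces.Finite) (y : E) :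
    ContinuousOn (fun z => K.baryCoord z y) K.space := by
  have := hK.to_subtype
  rw [SimplicialComplex.space, biUnion_eq_iUnion]
  exact (locallyFinite_of_finite _).continuousOn_iUnion
    (fun s => s.1.finite_toSet.isClosed_convexHull (𝕜 := ℝ))
    fun s => continuousOn_baryCoord_convexHull s.2 y

end Geometry.SimplicialComplex

theorem mem_starOf_iff {F : Set (Finset E)} {V : Set E} {z : E} :
    z ∈ starOf F V ↔ ∃ s ∈ F, (∃ v ∈ V, v ∈ s) ∧ z ∈ combInterior s := by
  simp only [starOf, mem_iUnion, mem_ofPred_eq, exists_prop, and_assoc]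

namespace Geometry.SimplicialComplex

variable {K A : SimplicialComplex ℝ E} {V : Set E} {S : Finset E} {z : E} {t : ℝ}

theorem starOf_subset_space : starOf K.faces V ⊆ K.space := fun _ hz =>
  let ⟨_, hs, _, hz⟩ := mem_starOf_iff.1 hz
  K.convexHull_subset_space hs hz.1

theorem space_subset_starOf (hsub : A.faces ⊆ K.faces) :
    A.space ⊆ starOf K.faces A.vertices := by
  classical
  intro z hz
  obtain ⟨s, hs, hzs⟩ := mem_space_iff.1 hz
  have hβ := isBaryWeights_baryCoord (hsub hs) hzs
  set u := s.filter fun y => K.baryCoord z y ≠ 0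
  have hβu : IsBaryWeights u z (K.baryCoord z) :=
    hβ.of_eq_zero (Finset.filter_subset _ _) fun y hys hyu => by
      simpa [u, hys] using hyu
  obtain ⟨v, hv⟩ : u.Nonempty := Finset.nonempty_iff_ne_empty.2 fun h => by
    simpa [h] using hβu.sum_eq_one
  have hu : u ∈ A.faces := A.down_closed hs (Finset.filter_subset _ _) ⟨v, hv⟩
  refine mem_starOf_iff.2 ⟨u, hsub hu, ⟨v, A.vertices_eq ▸ mem_biUnion hu hv, hv⟩, ?_⟩
  exact (mem_combInterior_iff (hsub hu)).2 ⟨hβu.mem_convexHull, fun y hy =>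
    (hβu.nonneg y).lt_of_ne' (Finset.mem_filter.1 hy).2⟩

open scoped Classical in
noncomputable def pushWeight (K : SimplicialComplex ℝ E) (V : Set E) (t : ℝ) (z y : E) : ℝ :=
  (if y ∈ V then 1 else 1 - t) * K.baryCoord z y

noncomputable def pushToward (K : SimplicialComplex ℝ E) (V : Set E) (S : Finset E) (t : ℝ)
    (z : E) : E :=
  S.centerMass (K.pushWeight V t z) id

theorem pushWeight_nonneg (hz : z ∈ K.space) (ht : t ≤ 1) (y : E) :
    0 ≤ K.pushWeight V t z y := by
  refine mul_nonneg ?_ (baryCoord_nonneg hz y)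
  split_ifs <;> linarith

theorem pushWeight_of_mem {y : E} (hy : y ∈ V) : K.pushWeight V t z y = K.baryCoord z y := by
  simp [pushWeight, hy]

theorem pushWeight_zero : K.pushWeight V 0 z = K.baryCoord z := by
  funext y
  simp [pushWeight]

theorem pushWeight_eq_baryCoord_of_mem_space (hsub : A.faces ⊆ K.faces) (hz : z ∈ A.space) :
    K.pushWeight A.vertices t z = K.baryCoord z := by
  funext y
  by_cases hy : y ∈ A.vertices
  · exact pushWeight_of_mem hy
  obtain ⟨s, hs, hzs⟩ := mem_space_iff.1 hz
  have hys : y ∉ s := fun hys => hy (A.vertices_eq ▸ mem_biUnion hs hys)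
  simp [pushWeight, (isBaryWeights_baryCoord (hsub hs) hzs).eq_zero_of_notMem y hys]

theorem pushToward_eq_self (hS : ∀ s ∈ K.faces, s ⊆ S) (hz : z ∈ K.space)
    (h : K.pushWeight V t z = K.baryCoord z) : K.pushToward V S t z = z := by
  obtain ⟨s, hs, hzs⟩ := mem_space_iff.1 hz
  have hβ := isBaryWeights_baryCoord hs hzs
  rw [pushToward, h, ← Finset.centerMass_subset id (hS s hs) fun y _ hy =>
    hβ.eq_zero_of_notMem y hy, Finset.centerMass_eq_of_sum_1 _ _ hβ.sum_eq_one]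
  exact hβ.sum_smul_eq

theorem pushToward_mem_combInterior (hS : ∀ s ∈ K.faces, s ⊆ S) (hz : z ∈ starOf K.faces V)
    (ht : t ≤ 1) : ∃ u ∈ K.faces, (∃ v ∈ V, v ∈ u) ∧ (t = 1 → (u : Set E) ⊆ V) ∧
      K.pushToward V S t z ∈ combInterior u := by
  classical
  obtain ⟨s, hs, ⟨v, hvV, hvs⟩, hzs⟩ := mem_starOf_iff.1 hz
  have hβ := isBaryWeights_baryCoord hs hzs.1
  set u := s.filter fun y => K.pushWeight V t z y ≠ 0
  have hvu : v ∈ u := Finset.mem_filter.2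
    ⟨hvs, by rw [pushWeight_of_mem hvV]; exact (((mem_combInterior_iff hs).1 hzs).2 v hvs).ne'⟩
  have hu : u ∈ K.faces := K.down_closed hs (Finset.filter_subset _ _) ⟨v, hvu⟩
  have hcm : K.pushToward V S t z = u.centerMass (K.pushWeight V t z) id := by
    refine (Finset.centerMass_subset id ((Finset.filter_subset _ _).trans (hS s hs))
      fun y _ hyu => by_contra fun hy => hyu (Finset.mem_filter.2 ⟨?_, hy⟩)).symm
    by_contra hys
    simp [pushWeight, hβ.eq_zero_of_notMem y hys] at hy
  refine ⟨u, hu, ⟨v, hvV, hvu⟩, ?_, hcm ▸ centerMass_mem_combInterior hu fun y hy => ?_⟩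
  · rintro rfl y hy
    by_contra hyV
    simp [u, pushWeight, hyV] at hy
  · exact (pushWeight_nonneg (starOf_subset_space hz) ht y).lt_of_ne' (Finset.mem_filter.1 hy).2

theorem pushToward_mem_starOf (hS : ∀ s ∈ K.faces, s ⊆ S) (hz : z ∈ starOf K.faces V)
    (ht : t ≤ 1) : K.pushToward V S t z ∈ starOf K.faces V :=
  let ⟨u, hu, hv, _, hmem⟩ := pushToward_mem_combInterior hS hz ht
  mem_starOf_iff.2 ⟨u, hu, hv, hmem⟩

theorem pushToward_one_mem_space (hS : ∀ s ∈ K.faces, s ⊆ S)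
    (hfull : ∀ s ∈ K.faces, (s : Set E) ⊆ A.vertices → s ∈ A.faces)
    (hz : z ∈ starOf K.faces A.vertices) : K.pushToward A.vertices S 1 z ∈ A.space :=
  let ⟨u, hu, _, huA, hmem⟩ := pushToward_mem_combInterior hS hz le_rfl
  A.convexHull_subset_space (hfull u hu (huA rfl)) hmem.1

theorem sum_pushWeight_pos (hS : ∀ s ∈ K.faces, s ⊆ S) (hz : z ∈ starOf K.faces V)
    (ht : t ≤ 1) : 0 < ∑ y ∈ S, K.pushWeight V t z y := by
  obtain ⟨s, hs, ⟨v, hvV, hvs⟩, hzs⟩ := mem_starOf_iff.1 hz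
  calc 0 < K.pushWeight V t z v := by
        rw [pushWeight_of_mem hvV]; exact ((mem_combInterior_iff hs).1 hzs).2 v hvs
    _ ≤ ∑ y ∈ S, K.pushWeight V t z y := Finset.single_le_sum
        (fun y _ => pushWeight_nonneg (starOf_subset_space hz) ht y) (hS s hs hvs)

theorem continuousOn_pushToward (hK : K.faces.Finite) (hS : ∀ s ∈ K.faces, s ⊆ S) :
    ContinuousOn (fun p : E × ℝ => K.pushToward V S p.2 p.1) (starOf K.faces V ×ˢ Iic 1) := by
  classical
  have hweight (y : E) : ContinuousOn (fun p : E × ℝ => K.pushWeight V p.2 p.1 y)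
      (starOf K.faces V ×ˢ Iic 1) := by
    refine ContinuousOn.mul ?_ ((continuousOn_baryCoord hK y).comp continuousOn_fst
      fun p hp => starOf_subset_space hp.1)
    split_ifs
    · exact continuousOn_const
    · exact (continuous_const.sub continuous_snd).continuousOn
  refine ContinuousOn.smul ((continuousOn_finsetSum _ fun y _ => hweight y).inv₀ fun p hp =>
    (sum_pushWeight_pos hS hp.1 hp.2).ne') (continuousOn_finsetSum _ fun y _ => ?_)
  exact (hweight y).smul continuousOn_const

end Geometry.SimplicialComplex

open SimplicialComplex

/-- If `K` is a finite simplicial complex and `A` is a full subcomplex of `K`,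
then `|A| ⊆ St(A;K)` and there is a strong deformation retraction of the regular neighborhood
`St(A;K)` onto the underlying space `|A|`. -/
theorem regular_neighborhood_deformation_retract
    (K A : Geometry.SimplicialComplex ℝ E)
    (hKfin : K.faces.Finite)
    (hsub : A.faces ⊆ K.faces)
    (hfull : ∀ s ∈ K.faces, (s : Set E) ⊆ A.vertices → s ∈ A.faces) :
    A.space ⊆ starOf K.faces A.vertices ∧
    ∃ H : ↥(starOf K.faces A.vertices) × ↥unitInterval → ↥(starOf K.faces A.vertices),
      Continuous H ∧
      (∀ z, H (z, 0) = z) ∧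
      (∀ z, ((H (z, 1) : E)) ∈ A.space) ∧
      (∀ z : ↥(starOf K.faces A.vertices), (z : E) ∈ A.space → ∀ t, H (z, t) = z) := by
  classical
  obtain ⟨S, hS⟩ : ∃ S : Finset E, ∀ s ∈ K.faces, s ⊆ S :=
    ⟨hKfin.toFinset.sup id, fun s hs => Finset.le_sup (f := id) (hKfin.mem_toFinset.2 hs)⟩
  refine ⟨space_subset_starOf hsub,
    fun p => ⟨K.pushToward A.vertices S p.2 p.1, pushToward_mem_starOf hS p.1.2 p.2.2.2⟩, ?_,
    fun z => ?_, fun z => pushToward_one_mem_space hS hfull z.2, fun z hz t => ?_⟩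
  · exact ((continuousOn_pushToward hKfin hS).comp_continuous
      (continuous_subtype_val.prodMap continuous_subtype_val)
      fun p => ⟨p.1.2, p.2.2.2⟩).subtype_mk _
  · exact Subtype.ext (pushToward_eq_self hS (starOf_subset_space z.2) pushWeight_zero)
  · exact Subtype.ext (pushToward_eq_self hS (starOf_subset_space z.2)
      (pushWeight_eq_baryCoord_of_mem_space hsub hz))
end
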